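/- arXiv:1307.0267 — 4 statements merged into one kernel-verified Lean document; each statement's English description precedes it below -/
import Mathlib

section
/- Let M be a 2×2 complex matrix with det M = 1. If tr M is not a real number, or if tr M is real with (tr M)² < 4, then the characteristic polynomial of M has no real root (M has no real eigenvalue), and moreover for every real t one has det((cos t)·1 − (sin t)·M) ≠ 0. -/
/-! The eigenvalues of `M` are the roots of `λ² − (tr M) λ + 1`, which has no real root under
either hypothesis: its imaginary part forces `λ = 0` when `tr M ∉ ℝ`, and its real part is
`(λ − tr M / 2)² + 1 − (tr M)² / 4 > 0` otherwise. For `sin t ≠ 0` the pencil determinant is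
`sin² t` times the characteristic polynomial at the real point `cot t`; for `sin t = 0` it is
`cos² t = 1`. -/

theorem Matrix.det_smul_one_sub_smul {n K : Type*} [Fintype n] [DecidableEq n] [Field K]
    (M : Matrix n n K) (a : K) {b : K} (hb : b ≠ 0) :
    (a • (1 : Matrix n n K) - b • M).det = b ^ Fintype.card n * M.charpoly.eval (a / b) := by
  rw [Matrix.eval_charpoly, ← Matrix.det_smul, smul_sub, Matrix.scalar_apply,
    ← Matrix.smul_one_eq_diagonal, smul_smul, mul_div_cancel₀ a hb]

theorem Complex.ofReal_sq_sub_mul_add_one_ne_zero {z : ℂ}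
    (hz : z.im ≠ 0 ∨ (z.im = 0 ∧ z.re ^ 2 < 4)) (μ : ℝ) :
    (μ : ℂ) ^ 2 - z * μ + 1 ≠ 0 := by
  intro h
  have him : z.im * μ = 0 := by simpa [pow_two] using congrArg Complex.im h
  have hre : μ ^ 2 - z.re * μ + 1 = 0 := by simpa [pow_two] using congrArg Complex.re h
  rcases hz with hz | ⟨-, hz⟩
  · obtain rfl : μ = 0 := (mul_eq_zero.mp him).resolve_left hz
    norm_num at hre
  · nlinarith [sq_nonneg (2 * μ - z.re)]

/-- Let `M` be a `2×2` complex matrix with `det M = 1`. If `tr M` is not a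
real number, or if `tr M` is real with `(tr M)² < 4`, then the characteristic polynomial
of `M` has no real root, and for every real `t`,
`det((cos t)·1 − (sin t)·M) ≠ 0`. -/
theorem stmt_0 (M : Matrix (Fin 2) (Fin 2) ℂ) (hdet : M.det = 1)
    (h : M.trace.im ≠ 0 ∨ (M.trace.im = 0 ∧ M.trace.re ^ 2 < 4)) :
    (∀ μ : ℝ, Polynomial.eval (μ : ℂ) M.charpoly ≠ 0) ∧
      (∀ t : ℝ, ((Real.cos t : ℂ) • (1 : Matrix (Fin 2) (Fin 2) ℂ)
          - (Real.sin t : ℂ) • M).det ≠ 0) := by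
  have no_real_root (μ : ℝ) : Polynomial.eval (μ : ℂ) M.charpoly ≠ 0 := by
    simpa [Matrix.charpoly_fin_two, hdet] using Complex.ofReal_sq_sub_mul_add_one_ne_zero h μ
  refine ⟨no_real_root, fun t => ?_⟩
  by_cases hs : Real.sin t = 0
  · have hc : Real.cos t ≠ 0 := by
      intro hc
      simpa [hs, hc] using Real.sin_sq_add_cos_sq t
    simpa [hs] using Complex.ofReal_ne_zero.mpr hc
  · rw [Matrix.det_smul_one_sub_smul M _ (Complex.ofReal_ne_zero.mpr hs)]
    refine mul_ne_zero (pow_ne_zero _ (Complex.ofReal_ne_zero.mpr hs)) ?_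
    exact_mod_cast no_real_root (Real.cos t / Real.sin t)
end

section
/- Let K be a symmetric element of SU(2) (K ∈ SU(2) with Kᵀ = K), and let g be a 2×2 complex matrix with det g = 1 such that g·gᵀ ∈ SU(2). Then there exists a real t with det((cos t)·1 − (sin t)·(gᵀ·K·g)) = 0 if and only if g·gᵀ·K = 1 or g·gᵀ·K = −1. Equivalently, for all g with g·gᵀ·K ≠ ±1, the determinant det((cos t)·1 − (sin t)·(gᵀ·K·g)) is nonzero for every real t. -/
/-!
Put `M = gᵀ K g` and `V = g gᵀ K`. Then `det M = 1` and `tr M = tr V`, so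
`det (cos t • 1 - sin t • M) = 1 - cos t sin t · tr V`. As an element of `SU(2)`, `V` has real
trace in `[-2, 2]`, while `|cos t sin t| ≤ 1/2`; hence the determinant vanishes for some `t`
exactly when `tr V = ±2`, and in `SU(2)` this happens only for `V = ±1`.
-/

open Matrix Complex ComplexConjugate
open scoped Real

namespace Matrix

theorem det_fin_two_smul_one_sub_smul {R : Type*} [CommRing R] (a b : R)
    (M : Matrix (Fin 2) (Fin 2) R) :
    (a • (1 : Matrix (Fin 2) (Fin 2) R) - b • M).det
      = a ^ 2 - a * b * M.trace + b ^ 2 * M.det := by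
  rw [det_fin_two, det_fin_two, trace_fin_two]
  simp only [sub_apply, smul_apply, smul_eq_mul, one_apply_eq, one_apply_ne zero_ne_one,
    one_apply_ne one_ne_zero]
  ring

theorem mem_specialUnitaryGroup_of_conjTranspose_mul_self {n α : Type*} [Fintype n]
    [DecidableEq n] [CommRing α] [StarRing α] {A : Matrix n n α} (hA : Aᴴ * A = 1)
    (hdet : A.det = 1) : A ∈ specialUnitaryGroup n α :=
  mem_specialUnitaryGroup_iff.mpr ⟨mem_unitaryGroup_iff'.mpr hA, hdet⟩

theorem star_eq_adjugate_of_mem_specialUnitaryGroup {n α : Type*} [Fintype n]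
    [DecidableEq n] [CommRing α] [StarRing α] {A : Matrix n n α}
    (hA : A ∈ specialUnitaryGroup n α) : star A = adjugate A := by
  obtain ⟨hU, hdet⟩ := mem_specialUnitaryGroup_iff.mp hA
  rw [← inv_eq_left_inv (mem_unitaryGroup_iff'.mp hU), inv_def, hdet]
  simp

section SpecialUnitaryFinTwo

variable {V : Matrix (Fin 2) (Fin 2) ℂ}

theorem apply_one_one_eq_conj_of_mem_specialUnitaryGroup
    (hV : V ∈ specialUnitaryGroup (Fin 2) ℂ) : V 1 1 = conj (V 0 0) := by
  have := congrArg (· 0 0) (star_eq_adjugate_of_mem_specialUnitaryGroup hV)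
  simpa [adjugate_fin_two] using this.symm

theorem apply_zero_one_eq_neg_conj_of_mem_specialUnitaryGroup
    (hV : V ∈ specialUnitaryGroup (Fin 2) ℂ) : V 0 1 = -conj (V 1 0) := by
  have := congrArg (· 0 1) (star_eq_adjugate_of_mem_specialUnitaryGroup hV)
  simpa [adjugate_fin_two, neg_eq_iff_eq_neg] using this.symm

theorem normSq_add_normSq_of_mem_specialUnitaryGroup
    (hV : V ∈ specialUnitaryGroup (Fin 2) ℂ) : normSq (V 0 0) + normSq (V 1 0) = 1 := by
  have := congrArg (· 0 0) (mem_unitaryGroup_iff'.mp (mem_specialUnitaryGroup_iff.mp hV).1)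
  simp only [mul_apply, Fin.sum_univ_two, star_apply, RCLike.star_def,
    ← normSq_eq_conj_mul_self, one_apply_eq] at this
  exact_mod_cast this

theorem trace_eq_two_mul_re_of_mem_specialUnitaryGroup
    (hV : V ∈ specialUnitaryGroup (Fin 2) ℂ) : V.trace = ((2 * (V 0 0).re : ℝ) : ℂ) := by
  rw [trace_fin_two, apply_one_one_eq_conj_of_mem_specialUnitaryGroup hV, add_conj]

theorem abs_re_le_one_of_mem_specialUnitaryGroup
    (hV : V ∈ specialUnitaryGroup (Fin 2) ℂ) : |(V 0 0).re| ≤ 1 := by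
  have hnorm := normSq_add_normSq_of_mem_specialUnitaryGroup hV
  rw [normSq_apply] at hnorm
  have := normSq_nonneg (V 1 0)
  rw [← sq_le_one_iff_abs_le_one]
  nlinarith [mul_self_nonneg (V 0 0).im]

theorem eq_re_smul_one_of_mem_specialUnitaryGroup_of_sq_re_eq_one
    (hV : V ∈ specialUnitaryGroup (Fin 2) ℂ) (hre : (V 0 0).re ^ 2 = 1) :
    V = ((V 0 0).re : ℂ) • 1 := by
  have hnorm := normSq_add_normSq_of_mem_specialUnitaryGroup hV
  rw [normSq_apply] at hnorm
  -- the whole norm of the column `(V 0 0, V 1 0)` is already carried by `re (V 0 0)`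
  have him : (V 0 0).im = 0 := by nlinarith [normSq_nonneg (V 1 0), mul_self_nonneg (V 0 0).im]
  have h10 : V 1 0 = 0 := by
    rw [← normSq_eq_zero]; nlinarith [normSq_nonneg (V 1 0), mul_self_nonneg (V 0 0).im]
  ext i j
  fin_cases i <;> fin_cases j <;>
    simp [Complex.ext_iff, him, h10, apply_zero_one_eq_neg_conj_of_mem_specialUnitaryGroup hV,
      apply_one_one_eq_conj_of_mem_specialUnitaryGroup hV]

theorem eq_one_or_eq_neg_one_iff_trace_of_mem_specialUnitaryGroup
    (hV : V ∈ specialUnitaryGroup (Fin 2) ℂ) :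
    (V = 1 ∨ V = -1) ↔ (V.trace = 2 ∨ V.trace = -2) := by
  constructor
  · rintro (rfl | rfl) <;> norm_num [trace_fin_two]
  · intro htr
    rw [trace_eq_two_mul_re_of_mem_specialUnitaryGroup hV] at htr
    have htr' : 2 * (V 0 0).re = 2 ∨ 2 * (V 0 0).re = -2 := by exact_mod_cast htr
    have hre : (V 0 0).re = 1 ∨ (V 0 0).re = -1 := by
      rcases htr' with h | h
      · left; linarith
      · right; linarith
    have hsq : (V 0 0).re ^ 2 = 1 := by rcases hre with h | h <;> rw [h] <;> norm_num
    rw [eq_re_smul_one_of_mem_specialUnitaryGroup_of_sq_re_eq_one hV hsq]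
    rcases hre with h | h <;> simp [h]

end SpecialUnitaryFinTwo

end Matrix

theorem Real.exists_cos_mul_sin_mul_eq_one_iff {r : ℝ} (hr : |r| ≤ 2) :
    (∃ t : ℝ, cos t * sin t * r = 1) ↔ r = 2 ∨ r = -2 := by
  constructor
  · rintro ⟨t, ht⟩
    have hsin : |sin (2 * t)| ≤ 1 := abs_sin_le_one _
    have h2 : sin (2 * t) * r = 2 := by rw [sin_two_mul]; linarith
    have : 2 ≤ |r| := by
      calc 2 = |sin (2 * t) * r| := by rw [h2, abs_two]
        _ ≤ 1 * |r| := by rw [abs_mul]; gcongr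
        _ = |r| := one_mul _
    exact (abs_eq zero_le_two).mp (le_antisymm hr this)
  · have hcs : cos (π / 4) * sin (π / 4) = 1 / 2 := by
      rw [cos_pi_div_four, sin_pi_div_four, ← sq, div_pow, sq_sqrt zero_le_two]
      norm_num
    rintro (rfl | rfl)
    · exact ⟨π / 4, by linear_combination 2 * hcs⟩
    · exact ⟨-(π / 4), by rw [cos_neg, sin_neg]; linear_combination 2 * hcs⟩

theorem stmt_7_general (K g : Matrix (Fin 2) (Fin 2) ℂ)
    (hK1 : K.conjTranspose * K = 1) (hK2 : K.det = 1)
    (hg : g.det = 1)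
    (hggt : (g * g.transpose).conjTranspose * (g * g.transpose) = 1) :
    (∃ t : ℝ, ((Real.cos t : ℂ) • (1 : Matrix (Fin 2) (Fin 2) ℂ)
        - (Real.sin t : ℂ) • (g.transpose * K * g)).det = 0) ↔
      (g * g.transpose * K = 1 ∨ g * g.transpose * K = -1) := by
  have hV : g * g.transpose * K ∈ specialUnitaryGroup (Fin 2) ℂ :=
    mul_mem (mem_specialUnitaryGroup_of_conjTranspose_mul_self hggt (by simp [hg]))
      (mem_specialUnitaryGroup_of_conjTranspose_mul_self hK1 hK2)
  have hdet : (g.transpose * K * g).det = 1 := by simp [hg, hK2]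
  have htr : (g.transpose * K * g).trace = (g * g.transpose * K).trace := by
    rw [trace_mul_comm, ← mul_assoc]
  set r : ℝ := 2 * ((g * g.transpose * K) 0 0).re
  have hr : (g * g.transpose * K).trace = r := trace_eq_two_mul_re_of_mem_specialUnitaryGroup hV
  have hr_le : |r| ≤ 2 := by
    have := abs_re_le_one_of_mem_specialUnitaryGroup hV
    rw [abs_mul, abs_two]; linarith
  have hdet_eq (t : ℝ) : ((Real.cos t : ℂ) • (1 : Matrix (Fin 2) (Fin 2) ℂ)
      - (Real.sin t : ℂ) • (g.transpose * K * g)).det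
        = ((1 - Real.cos t * Real.sin t * r : ℝ) : ℂ) := by
    rw [det_fin_two_smul_one_sub_smul, hdet, htr, hr]
    have hpyth : (Real.cos t : ℂ) ^ 2 + (Real.sin t : ℂ) ^ 2 = 1 := by
      exact_mod_cast Real.cos_sq_add_sin_sq t
    simp only [ofReal_sub, ofReal_mul, ofReal_one]
    linear_combination hpyth
  simp_rw [hdet_eq, ofReal_eq_zero, sub_eq_zero, eq_comm (a := (1 : ℝ)),
    Real.exists_cos_mul_sin_mul_eq_one_iff hr_le,
    eq_one_or_eq_neg_one_iff_trace_of_mem_specialUnitaryGroup hV, hr]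
  norm_cast

/-- Let `K` be a symmetric element of `SU(2)` and let `g` be a `2×2`
complex matrix with `det g = 1` and `g·gᵀ ∈ SU(2)`. Then
`∃ t ∈ ℝ, det((cos t)·1 − (sin t)·(gᵀ·K·g)) = 0` iff `g·gᵀ·K = 1` or `g·gᵀ·K = −1`. -/
theorem stmt_7 (K g : Matrix (Fin 2) (Fin 2) ℂ)
    (hK1 : K.conjTranspose * K = 1) (hK2 : K.det = 1) (hKsymm : K.transpose = K)
    (hg : g.det = 1)
    (hggt : (g * g.transpose).conjTranspose * (g * g.transpose) = 1) :
    (∃ t : ℝ, ((Real.cos t : ℂ) • (1 : Matrix (Fin 2) (Fin 2) ℂ)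
        - (Real.sin t : ℂ) • (g.transpose * K * g)).det = 0) ↔
      (g * g.transpose * K = 1 ∨ g * g.transpose * K = -1) :=
  stmt_7_general K g hK1 hK2 hg hggt
end

section
/- Let G be a group and a, b ∈ G elements satisfying a² = b², a² = (a·b)², a⁴ = 1, and a² ≠ 1. Then the subgroup of G generated by {a, b} has exactly 8 elements and is isomorphic to the quaternion group Q₈ of order 8. -/
/-!
The relations give `a * b = b * a⁻¹` and `b ^ 2 = a ^ 2`, which are the defining relations of
`Q₈` with `a ↦ a 1` and `b ↦ xa 0`; so they define a homomorphism `Q₈ → G` onto `⟨a, b⟩`.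
Every nontrivial element of `Q₈` has the central element `a 2 = -1` among its powers, and
`a 2` maps to `a ^ 2 ≠ 1`, so the kernel is trivial.
-/

section ZModPow

variable {G : Type*} [Group G] {m : ℕ} {a : G}

theorem zpow_zmod_cast_of_eq_intCast (ha : a ^ m = 1) {i : ZMod m} {k : ℤ} (h : i = k) :
    a ^ (i.cast : ℤ) = a ^ k := by
  rw [← orderOf_dvd_sub_iff_zpow_eq_zpow]
  refine (Int.natCast_dvd_natCast.mpr (orderOf_dvd_of_pow_eq_one ha)).trans ?_
  rw [← ZMod.intCast_zmod_eq_zero_iff_dvd]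
  simp [ZMod.intCast_cast, h]

theorem zpow_zmod_cast_add (ha : a ^ m = 1) (i j : ZMod m) :
    a ^ ((i + j).cast : ℤ) = a ^ (i.cast : ℤ) * a ^ (j.cast : ℤ) := by
  rw [zpow_zmod_cast_of_eq_intCast ha (k := i.cast + j.cast) (by simp [ZMod.intCast_cast]),
    zpow_add]

theorem zpow_zmod_cast_neg (ha : a ^ m = 1) (i : ZMod m) :
    a ^ ((-i).cast : ℤ) = (a ^ (i.cast : ℤ))⁻¹ := by
  rw [zpow_zmod_cast_of_eq_intCast ha (k := -i.cast) (by simp [ZMod.intCast_cast]), zpow_neg]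

end ZModPow

section Relations

variable {G : Type*} [Group G] {a b : G}

theorem mul_eq_mul_inv_of_sq_eq (h1 : a ^ 2 = b ^ 2) (h2 : a ^ 2 = (a * b) ^ 2) :
    a * b = b * a⁻¹ := by
  have hbab : b * a * b = a := by
    rw [sq, sq, mul_assoc] at h2
    simpa [mul_assoc] using (mul_left_cancel h2).symm
  calc a * b = b⁻¹ * (b * a * b) := by group
    _ = b⁻¹ * (a * a) * a⁻¹ := by rw [hbab]; group
    _ = b⁻¹ * (b * b) * a⁻¹ := by rw [← sq, h1, sq]
    _ = b * a⁻¹ := by group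

theorem zpow_mul_eq_mul_inv_of_mul_eq_mul_inv (hab : a * b = b * a⁻¹) (k : ℤ) :
    a ^ k * b = b * (a ^ k)⁻¹ := by
  rw [← inv_zpow]
  exact (SemiconjBy.zpow_right (a := b) hab.symm k).symm

end Relations

namespace QuaternionGroup

variable {G : Type*} [Group G] {n : ℕ}

/-- Exponents are read through `ZMod.cast` into `ℤ` rather than `ZMod.val`, so that `n = 0`
(where `ZMod 0 = ℤ`) is covered as well. -/
def lift (a b : G) (ha : a ^ (2 * n) = 1) (hb : b ^ 2 = a ^ n) (hab : a * b = b * a⁻¹) :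
    QuaternionGroup n →* G where
  toFun
    | .a i => a ^ (i.cast : ℤ)
    | .xa i => b * a ^ (i.cast : ℤ)
  map_one' := by
    show a ^ ((0 : ZMod (2 * n)).cast : ℤ) = 1
    rw [ZMod.cast_zero, zpow_zero]
  map_mul' := by
    have hconj := zpow_mul_eq_mul_inv_of_mul_eq_mul_inv hab
    rintro (i | i) (j | j)
    · exact zpow_zmod_cast_add ha i j
    · show b * a ^ ((j - i).cast : ℤ) = a ^ (i.cast : ℤ) * (b * a ^ (j.cast : ℤ))
      rw [sub_eq_neg_add, zpow_zmod_cast_add ha, zpow_zmod_cast_neg ha, ← mul_assoc,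
        ← mul_assoc, hconj]
    · show b * a ^ ((i + j).cast : ℤ) = b * a ^ (i.cast : ℤ) * a ^ (j.cast : ℤ)
      rw [zpow_zmod_cast_add ha, mul_assoc]
    · show a ^ ((n + j - i : ZMod (2 * n)).cast : ℤ) =
        b * a ^ (i.cast : ℤ) * (b * a ^ (j.cast : ℤ))
      have hn : a ^ ((n : ZMod (2 * n)).cast : ℤ) = b ^ 2 := by
        rw [zpow_zmod_cast_of_eq_intCast ha (k := n) (by simp), zpow_natCast, hb]
      rw [add_sub_assoc, sub_eq_neg_add, zpow_zmod_cast_add ha, zpow_zmod_cast_add ha,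
        zpow_zmod_cast_neg ha, hn, sq, mul_assoc b (a ^ _), ← mul_assoc (a ^ _) b, hconj]
      simp only [mul_assoc]

section Lift

variable {a b : G} {ha : a ^ (2 * n) = 1} {hb : b ^ 2 = a ^ n} {hab : a * b = b * a⁻¹}

theorem lift_a (i : ZMod (2 * n)) : lift a b ha hb hab (.a i) = a ^ (i.cast : ℤ) := rfl

theorem lift_xa (i : ZMod (2 * n)) : lift a b ha hb hab (.xa i) = b * a ^ (i.cast : ℤ) := rfl

theorem range_lift : (lift a b ha hb hab).range = Subgroup.closure {a, b} := by
  have ha_mem : a ∈ Subgroup.closure {a, b} := Subgroup.subset_closure (by simp)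
  have hb_mem : b ∈ Subgroup.closure {a, b} := Subgroup.subset_closure (by simp)
  apply le_antisymm
  · rintro _ ⟨i | i, rfl⟩
    · exact zpow_mem ha_mem _
    · exact mul_mem hb_mem (zpow_mem ha_mem _)
  · rw [Subgroup.closure_le]
    rintro x (rfl | rfl)
    · exact ⟨.a 1, by rw [lift_a, zpow_zmod_cast_of_eq_intCast ha (k := 1) (by simp), zpow_one]⟩
    · exact ⟨.xa 0, by rw [lift_xa, ZMod.cast_zero, zpow_zero, mul_one]⟩

end Lift

theorem eq_one_or_eq_a_two_or_sq_eq_a_two (x : QuaternionGroup 2) :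
    x = 1 ∨ x = a 2 ∨ x ^ 2 = a 2 := by
  decide +revert

theorem injective_of_map_a_two_ne_one {f : QuaternionGroup 2 →* G} (hf : f (a 2) ≠ 1) :
    Function.Injective f := by
  refine (injective_iff_map_eq_one f).mpr fun x hx ↦ ?_
  rcases eq_one_or_eq_a_two_or_sq_eq_a_two x with h | rfl | h
  · exact h
  · exact absurd hx hf
  · exact absurd (by rw [← h, map_pow, hx, one_pow]) hf

end QuaternionGroup

/-- If `a, b` in a group `G` satisfy `a² = b²`, `a² = (ab)²`, `a⁴ = 1`
and `a² ≠ 1`, then the subgroup generated by `{a, b}` has exactly 8 elements and is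
isomorphic to the quaternion group `Q₈`. -/
theorem stmt_16 (G : Type*) [Group G] (a b : G)
    (h1 : a ^ 2 = b ^ 2) (h2 : a ^ 2 = (a * b) ^ 2)
    (h3 : a ^ 4 = 1) (h4 : a ^ 2 ≠ 1) :
    Nat.card (Subgroup.closure ({a, b} : Set G)) = 8 ∧
      Nonempty ((Subgroup.closure ({a, b} : Set G)) ≃* QuaternionGroup 2) := by
  set f := QuaternionGroup.lift a b h3 h1.symm (mul_eq_mul_inv_of_sq_eq h1 h2)
  have hf : Function.Injective f := QuaternionGroup.injective_of_map_a_two_ne_one <| by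
    rwa [QuaternionGroup.lift_a,
      zpow_zmod_cast_of_eq_intCast h3 (k := (2 : ℕ)) (by simp), zpow_natCast]
  let e : QuaternionGroup 2 ≃* Subgroup.closure ({a, b} : Set G) :=
    (MonoidHom.ofInjective hf).trans (MulEquiv.subgroupCongr QuaternionGroup.range_lift)
  refine ⟨?_, ⟨e.symm⟩⟩
  rw [← Nat.card_congr e.toEquiv, Nat.card_eq_fintype_card, QuaternionGroup.card]
end

section
/- Fix a nonzero scalar ħ ∈ ℂ. For a symmetric 2×2 complex matrix K, define a product on the polynomial ring ℂ[u₁, u₂] by f ∗_K g := Σ_{m≥0} (1/m!)(iħ/2)^m Σ_{i₁,…,i_m, j₁,…,j_m ∈ {1,2}} (Π_a Λ_{i_a j_a}) (∂_{i₁}⋯∂_{i_m} f)·(∂_{j₁}⋯∂_{j_m} g), where Λ = K + J and J = [[0, −1], [1, 0]] (the sum is finite on polynomials). For two symmetric matrices K, K', define the intertwiner I_K^{K'} := Σ_{m≥0} (1/m!)(iħ/4)^m (Σ_{i,j} (K'−K)_{ij} ∂_i ∂_j)^m, a well-defined ℂ-linear map on ℂ[u₁, u₂]. Then for all polynomials f,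 g: I_K^{K'}(f ∗_K g) = (I_K^{K'} f) ∗_{K'} (I_K^{K'} g); that is, I_K^{K'} is an algebra isomorphism from (ℂ[u₁,u₂], ∗_K) to (ℂ[u₁,u₂], ∗_{K'}). -/
/-!
Write `f ⊠ g = f(u) g(v)` in doubled variables `u, v` and let `μ` restrict to the diagonal
`u = v`. Then `f ∗_Λ g = μ (exp ((iħ/2) Σ Λᵢⱼ ∂_{uᵢ} ∂_{vⱼ}) (f ⊠ g))`. With `c = iħ/4`,
`S = K' − K` and `Δ_S = Σ Sᵢⱼ ∂ᵢ ∂ⱼ`, the chain rule `∂ᵢ ∘ μ = μ ∘ (∂_{uᵢ} + ∂_{vᵢ})` and the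
symmetry of `S` give `exp (c Δ_S) ∘ μ = μ ∘ exp (c (Δ_S^u + Δ_S^v + 2 Σ Sᵢⱼ ∂_{uᵢ} ∂_{vⱼ}))`.
All these constant-coefficient operators commute and lower the degree, so their exponentials are
finite sums and multiply like exponentials of commuting elements. Regrouping the exponent as
`(iħ/2) Σ (K + J + S)ᵢⱼ ∂_{uᵢ} ∂_{vⱼ} + c (Δ_S^u + Δ_S^v)`, and using that `exp (c (Δ_S^u + Δ_S^v))`
maps `f ⊠ g` to `I f ⊠ I g`, gives `(I f) ∗_{K'} (I g)`. The inverse of `I_K^{K'}` is `I_{K'}^K`.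
-/

open MvPolynomial

/-- The partial derivative `∂ᵢ` on `ℂ[u₁,u₂]`, as an endomorphism. -/
noncomputable def pEnd (i : Fin 2) : Module.End ℂ (MvPolynomial (Fin 2) ℂ) :=
  (MvPolynomial.pderiv i).toLinearMap

/-- The composition `∂_{v 0} ∘ ⋯ ∘ ∂_{v (m−1)}` of partial derivatives. -/
noncomputable def derivs {m : ℕ} (v : Fin m → Fin 2) :
    Module.End ℂ (MvPolynomial (Fin 2) ℂ) :=
  (List.ofFn fun a => pEnd (v a)).prod

/-- The `m`-th term `(1/m!)(iħ/2)^m Σ_{i,j} (Π_a Λ_{i_a j_a})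
(∂_{i₁}⋯∂_{i_m} f)·(∂_{j₁}⋯∂_{j_m} g)` of the `K`-ordered star product,
with `Λ = K + J`; here `hb` stands for `ħ` and `Lam` for `Λ`. -/
noncomputable def starTerm (hb : ℂ) (Lam : Matrix (Fin 2) (Fin 2) ℂ) (m : ℕ)
    (f g : MvPolynomial (Fin 2) ℂ) : MvPolynomial (Fin 2) ℂ :=
  ((m.factorial : ℂ)⁻¹ * (Complex.I * hb / 2) ^ m) •
    ∑ i : Fin m → Fin 2, ∑ j : Fin m → Fin 2,
      (∏ a, Lam (i a) (j a)) • (derivs i f * derivs j g)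

/-- The star product `f ∗_K g = Σ_{m ≥ 0} starTerm hb Λ m f g`; the sum is finite on
polynomials, since all terms with `m > totalDegree f` vanish (an `m`-fold derivative
of `f` is then zero), so it is given by the finite partial sum below. -/
noncomputable def starK (hb : ℂ) (Lam : Matrix (Fin 2) (Fin 2) ℂ)
    (f g : MvPolynomial (Fin 2) ℂ) : MvPolynomial (Fin 2) ℂ :=
  ∑ m ∈ Finset.range (f.totalDegree + 1), starTerm hb Lam m f g

/-- The matrix `J = [[0, −1], [1, 0]]`. -/
def matJ : Matrix (Fin 2) (Fin 2) ℂ := !![0, -1; 1, 0]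

/-- The second-order operator `Σ_{i,j} A_{ij} ∂_i ∂_j`. -/
noncomputable def twistOp (A : Matrix (Fin 2) (Fin 2) ℂ) :
    Module.End ℂ (MvPolynomial (Fin 2) ℂ) :=
  ∑ i : Fin 2, ∑ j : Fin 2, A i j • (pEnd i * pEnd j)

/-- The intertwiner `I_K^{K'} = exp((iħ/4) Σ_{i,j} (K'−K)_{ij} ∂_i ∂_j)`; the
exponential series is finite on each polynomial (terms with `2m > totalDegree f`
vanish), so it is given by the finite partial sum below. -/
noncomputable def intertwiner (hb : ℂ) (K K' : Matrix (Fin 2) (Fin 2) ℂ)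
    (f : MvPolynomial (Fin 2) ℂ) : MvPolynomial (Fin 2) ℂ :=
  ∑ m ∈ Finset.range (f.totalDegree + 1),
    ((m.factorial : ℂ)⁻¹ * (Complex.I * hb / 4) ^ m) • ((twistOp (K' - K)) ^ m) f

open Finset

section DegreeLowering

variable {R σ : Type*} [CommRing R]

def LowersDegree (L : Module.End R (MvPolynomial σ R)) : Prop :=
  ∀ p, L p = 0 ∨ (L p).totalDegree < p.totalDegree

theorem totalDegree_pderiv_le (i : σ) (p : MvPolynomial σ R) :
    (pderiv i p).totalDegree ≤ p.totalDegree - 1 := by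
  conv_lhs => rw [p.as_sum]
  rw [map_sum]
  refine totalDegree_finsetSum_le fun v hv => ?_
  rw [pderiv_monomial]
  by_cases hvi : v i = 0
  · simp [hvi]
  refine (totalDegree_monomial_le _ _).trans ?_
  have hle : Finsupp.single i 1 ≤ v := Finsupp.single_le_iff.2 (Nat.one_le_iff_ne_zero.2 hvi)
  have hsum : ((v - Finsupp.single i 1).sum fun _ => id) + 1 = v.sum fun _ e => e := by
    conv_rhs => rw [← tsub_add_cancel_of_le hle]
    rw [Finsupp.sum_add_index' (fun _ => rfl) (fun _ _ _ => rfl), Finsupp.sum_single_index rfl]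
    rfl
  have := le_totalDegree hv
  omega

theorem lowersDegree_pderiv (i : σ) :
    LowersDegree (pderiv i : Derivation R (MvPolynomial σ R) (MvPolynomial σ R)).toLinearMap := by
  intro p
  obtain h0 | hpos := Nat.eq_zero_or_pos p.totalDegree
  · left
    rw [totalDegree_eq_zero_iff_eq_C.1 h0]
    exact pderiv_C
  · right
    exact (totalDegree_pderiv_le i p).trans_lt (by omega)

theorem pderiv_pderiv_comm (i j : σ) (p : MvPolynomial σ R) :
    pderiv i (pderiv j p) = pderiv j (pderiv i p) := by
  classical
  have h : ⁅pderiv i, pderiv j⁆ = (0 : Derivation R (MvPolynomial σ R) (MvPolynomial σ R)) :=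
    derivation_ext fun k => by
      rw [Derivation.commutator_apply, pderiv_X, pderiv_X, Pi.single_apply, Pi.single_apply]
      split_ifs <;> simp
  simpa [Derivation.commutator_apply, sub_eq_zero] using congr($h p)

namespace LowersDegree

variable {L M : Module.End R (MvPolynomial σ R)}

theorem add (hL : LowersDegree L) (hM : LowersDegree M) : LowersDegree (L + M) := by
  intro p
  rcases hL p with h1 | h1 <;> rcases hM p with h2 | h2
  · left; simp [h1, h2]
  · right; simpa [h1] using h2
  · right; simpa [h2] using h1
  · right
    exact (totalDegree_add _ _).trans_lt (max_lt h1 h2)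

theorem smul (c : R) (hL : LowersDegree L) : LowersDegree (c • L) := by
  intro p
  rcases hL p with h | h
  · left; simp [h]
  · right; exact (totalDegree_smul_le c (L p)).trans_lt h

theorem mul (hL : LowersDegree L) (hM : LowersDegree M) : LowersDegree (L * M) := by
  intro p
  rcases hM p with h | h
  · left; simp [h]
  · rcases hL (M p) with h2 | h2
    · left; exact h2
    · right; exact h2.trans h

theorem sum {ι : Type*} (s : Finset ι) {F : ι → Module.End R (MvPolynomial σ R)}
    (h : ∀ i ∈ s, LowersDegree (F i)) : LowersDegree (∑ i ∈ s, F i) := by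
  classical
  induction s using Finset.induction_on with
  | empty => exact fun p => Or.inl rfl
  | insert a s ha ih =>
    rw [Finset.sum_insert ha]
    exact (h a (mem_insert_self a s)).add (ih fun i hi => h i (mem_insert_of_mem hi))

theorem pow_apply_eq_zero_or (hL : LowersDegree L) (m : ℕ) (p : MvPolynomial σ R) :
    (L ^ m) p = 0 ∨ ((L ^ m) p).totalDegree + m ≤ p.totalDegree := by
  induction m generalizing p with
  | zero => simp
  | succ n ih =>
    rw [pow_succ, Module.End.mul_apply]
    rcases hL p with h | h
    · simp [h]
    · rcases ih (L p) with h2 | h2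
      · exact Or.inl h2
      · right; omega

theorem pow_apply_eq_zero (hL : LowersDegree L) {m : ℕ} {p : MvPolynomial σ R}
    (h : p.totalDegree < m) : (L ^ m) p = 0 :=
  (hL.pow_apply_eq_zero_or m p).resolve_right (by omega)

end LowersDegree

end DegreeLowering

section TruncExp

variable {R σ τ : Type*} [Field R]

-- For degree-lowering `L` and `p.totalDegree < N` this is the whole exponential series `exp L p`.
noncomputable def truncExp (L : Module.End R (MvPolynomial σ R)) (N : ℕ) :
    Module.End R (MvPolynomial σ R) :=
  ∑ m ∈ range N, (m.factorial : R)⁻¹ • L ^ m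

theorem truncExp_apply (L : Module.End R (MvPolynomial σ R)) (N : ℕ) (p : MvPolynomial σ R) :
    truncExp L N p = ∑ m ∈ range N, (m.factorial : R)⁻¹ • (L ^ m) p := by
  simp [truncExp, LinearMap.sum_apply]

theorem truncExp_smul_apply (c : R) (L : Module.End R (MvPolynomial σ R)) (N : ℕ)
    (p : MvPolynomial σ R) :
    truncExp (c • L) N p = ∑ m ∈ range N, ((m.factorial : R)⁻¹ * c ^ m) • (L ^ m) p := by
  simp only [truncExp_apply, smul_pow, LinearMap.smul_apply, smul_smul]

theorem truncExp_zero_apply {N : ℕ} (hN : 0 < N) (p : MvPolynomial σ R) :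
    truncExp 0 N p = p := by
  rw [truncExp_apply, sum_eq_single_of_mem 0 (mem_range.2 hN) fun m _ hm => by simp [hm]]
  simp

theorem truncExp_map (φ : MvPolynomial τ R →ₗ[R] MvPolynomial σ R)
    {L : Module.End R (MvPolynomial σ R)} {M : Module.End R (MvPolynomial τ R)}
    (h : ∀ p, L (φ p) = φ (M p)) (N : ℕ) (p : MvPolynomial τ R) :
    truncExp L N (φ p) = φ (truncExp M N p) := by
  have hpow (m : ℕ) : (L ^ m) (φ p) = φ ((M ^ m) p) :=
    LinearMap.congr_fun (Module.End.commute_pow_left_of_commute (LinearMap.ext h) m) p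
  simp [truncExp_apply, hpow]

namespace LowersDegree

variable {L A B : Module.End R (MvPolynomial σ R)}

theorem totalDegree_truncExp_apply_le (hL : LowersDegree L) (N : ℕ) (p : MvPolynomial σ R) :
    (truncExp L N p).totalDegree ≤ p.totalDegree := by
  rw [truncExp_apply]
  refine totalDegree_finsetSum_le fun m _ => (totalDegree_smul_le _ _).trans ?_
  rcases hL.pow_apply_eq_zero_or m p with h | h
  · simp [h]
  · omega

theorem truncExp_apply_of_le (hL : LowersDegree L) {N N' : ℕ} {p : MvPolynomial σ R}
    (hN : p.totalDegree < N) (hNN' : N ≤ N') : truncExp L N' p = truncExp L N p := by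
  rw [truncExp_apply, truncExp_apply]
  refine (sum_subset (range_subset_range.2 hNN') fun m _ hm => ?_).symm
  rw [hL.pow_apply_eq_zero (by simp at hm; omega), smul_zero]

theorem truncExp_add_apply [CharZero R] (hAB : Commute A B) (hA : LowersDegree A)
    (hB : LowersDegree B) {N : ℕ} {p : MvPolynomial σ R} (hN : p.totalDegree < N) :
    truncExp (A + B) N p = truncExp A N (truncExp B N p) := by
  let F (k l : ℕ) := ((k.factorial : R)⁻¹ * (l.factorial : R)⁻¹) • (A ^ k) ((B ^ l) p)
  have hF (k l : ℕ) (hkl : N ≤ k + l) : F k l = 0 := by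
    rcases hB.pow_apply_eq_zero_or l p with h | h
    · simp [F, h]
    · simp only [F, hA.pow_apply_eq_zero (m := k) (p := (B ^ l) p) (by omega), smul_zero]
  calc truncExp (A + B) N p
      = ∑ m ∈ range N, ∑ k ∈ range (m + 1), F k (m - k) := by
        rw [truncExp_apply]
        refine sum_congr rfl fun m _ => ?_
        rw [hAB.add_pow, LinearMap.sum_apply, smul_sum]
        refine sum_congr rfl fun k hk => ?_
        have hkm : k ≤ m := Nat.lt_succ_iff.mp (mem_range.1 hk)
        rw [Module.End.mul_apply, Module.End.natCast_apply, ← Nat.cast_smul_eq_nsmul R,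
          map_smul, smul_smul, Module.End.mul_apply]
        congr 1
        have : (m.factorial : R) ≠ 0 := Nat.cast_ne_zero.2 m.factorial_ne_zero
        rw [Nat.cast_choose R hkm]
        field_simp
    _ = ∑ k ∈ range N, ∑ l ∈ range N, F k l := by
        rw [sum_range_diag_flip]
        refine sum_congr rfl fun k hk => sum_subset (range_subset_range.2 (Nat.sub_le _ _))
          fun l _ hl => hF k l ?_
        simp at hl hk
        omega
    _ = truncExp A N (truncExp B N p) := by
        rw [truncExp_apply]
        refine sum_congr rfl fun k _ => ?_
        rw [truncExp_apply, map_sum, smul_sum]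
        exact sum_congr rfl fun l _ => by rw [map_smul, smul_smul]

end LowersDegree

end TruncExp

section SecondOrderOp

variable {R ι σ : Type*} [CommRing R] [Fintype ι]

noncomputable def secondOrderOp (A : Matrix ι ι R) (s t : ι → σ) :
    Module.End R (MvPolynomial σ R) :=
  ∑ i, ∑ j, A i j • ((pderiv (s i)).toLinearMap * (pderiv (t j)).toLinearMap)

theorem secondOrderOp_apply (A : Matrix ι ι R) (s t : ι → σ) (p : MvPolynomial σ R) :
    secondOrderOp A s t p = ∑ i, ∑ j, A i j • pderiv (s i) (pderiv (t j) p) := by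
  simp [secondOrderOp, LinearMap.sum_apply]

theorem lowersDegree_secondOrderOp (A : Matrix ι ι R) (s t : ι → σ) :
    LowersDegree (secondOrderOp A s t) :=
  LowersDegree.sum _ fun _ _ => LowersDegree.sum _ fun _ _ =>
    ((lowersDegree_pderiv _).mul (lowersDegree_pderiv _)).smul _

theorem commute_secondOrderOp (A B : Matrix ι ι R) (s t s' t' : ι → σ) :
    Commute (secondOrderOp A s t) (secondOrderOp B s' t') := by
  have hd (a b : σ) : Commute (pderiv a : Derivation R (MvPolynomial σ R) _).toLinearMap
      (pderiv b).toLinearMap := LinearMap.ext (pderiv_pderiv_comm a b)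
  refine .sum_left _ _ _ fun i _ => .sum_left _ _ _ fun j _ =>
    .sum_right _ _ _ fun k _ => .sum_right _ _ _ fun l _ => ?_
  exact (((hd _ _).mul_right (hd _ _)).mul_left ((hd _ _).mul_right (hd _ _))).smul_left _
    |>.smul_right _

theorem secondOrderOp_add (A B : Matrix ι ι R) (s t : ι → σ) :
    secondOrderOp (A + B) s t = secondOrderOp A s t + secondOrderOp B s t := by
  simp only [secondOrderOp, Matrix.add_apply, add_smul, sum_add_distrib]

theorem secondOrderOp_zero (s t : ι → σ) : secondOrderOp (0 : Matrix ι ι R) s t = 0 := by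
  simp [secondOrderOp]

theorem secondOrderOp_transpose (A : Matrix ι ι R) (s t : ι → σ) :
    secondOrderOp A.transpose t s = secondOrderOp A s t := by
  refine LinearMap.ext fun p => ?_
  rw [secondOrderOp_apply, secondOrderOp_apply, sum_comm]
  simp only [Matrix.transpose_apply, pderiv_pderiv_comm (t _)]

end SecondOrderOp

section Doubling

variable {R σ : Type*} [CommRing R]

noncomputable def boxProd :
    MvPolynomial σ R →ₗ[R] MvPolynomial σ R →ₗ[R] MvPolynomial (σ ⊕ σ) R :=
  (LinearMap.mul R _).compl₁₂ (rename Sum.inl).toLinearMap (rename Sum.inr).toLinearMap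

theorem boxProd_apply (f g : MvPolynomial σ R) :
    boxProd f g = rename Sum.inl f * rename Sum.inr g := rfl

noncomputable def diagMap : MvPolynomial (σ ⊕ σ) R →ₐ[R] MvPolynomial σ R :=
  rename (Sum.elim id id)

theorem diagMap_boxProd (f g : MvPolynomial σ R) : diagMap (boxProd f g) = f * g := by
  simp [boxProd_apply, diagMap, rename_rename]

theorem totalDegree_boxProd_le (f g : MvPolynomial σ R) :
    (boxProd f g).totalDegree ≤ f.totalDegree + g.totalDegree :=
  (totalDegree_mul _ _).trans (add_le_add (totalDegree_rename_le _ _) (totalDegree_rename_le _ _))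

theorem pderiv_inl_boxProd (i : σ) (f g : MvPolynomial σ R) :
    pderiv (Sum.inl i) (boxProd f g) = boxProd (pderiv i f) g := by
  classical
  have hg : pderiv (Sum.inl i) (rename Sum.inr g) = 0 :=
    pderiv_eq_zero_of_notMem_vars fun h => by
      obtain ⟨_, -, h⟩ := Finset.mem_image.1 (vars_rename Sum.inr g h)
      exact Sum.inr_ne_inl h
  rw [boxProd_apply, boxProd_apply, Derivation.leibniz, hg, smul_zero, zero_add, smul_eq_mul,
    pderiv_rename Sum.inl_injective, mul_comm]

theorem pderiv_inr_boxProd (i : σ) (f g : MvPolynomial σ R) :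
    pderiv (Sum.inr i) (boxProd f g) = boxProd f (pderiv i g) := by
  classical
  have hf : pderiv (Sum.inr i) (rename Sum.inl f) = 0 :=
    pderiv_eq_zero_of_notMem_vars fun h => by
      obtain ⟨_, -, h⟩ := Finset.mem_image.1 (vars_rename Sum.inl f h)
      exact Sum.inl_ne_inr h
  rw [boxProd_apply, boxProd_apply, Derivation.leibniz, hf, smul_zero, add_zero, smul_eq_mul,
    pderiv_rename Sum.inr_injective]

theorem pderiv_diagMap (j : σ) (p : MvPolynomial (σ ⊕ σ) R) :
    pderiv j (diagMap p) = diagMap (pderiv (Sum.inl j) p + pderiv (Sum.inr j) p) := by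
  classical
  induction p using MvPolynomial.induction_on with
  | C a => simp [diagMap]
  | add p q hp hq => simp only [map_add, hp, hq]; abel
  | mul_X p k ih =>
    simp only [diagMap] at ih
    rcases k with k | k <;> by_cases hkj : k = j <;>
      simp [diagMap, ih, pderiv_X, hkj] <;> ring

variable [Fintype σ]

theorem secondOrderOp_inl_boxProd (A : Matrix σ σ R) (f g : MvPolynomial σ R) :
    secondOrderOp A Sum.inl Sum.inl (boxProd f g) = boxProd (secondOrderOp A id id f) g := by
  simp [secondOrderOp_apply, pderiv_inl_boxProd]

theorem secondOrderOp_inr_boxProd (A : Matrix σ σ R) (f g : MvPolynomial σ R) :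
    secondOrderOp A Sum.inr Sum.inr (boxProd f g) = boxProd f (secondOrderOp A id id g) := by
  simp [secondOrderOp_apply, pderiv_inr_boxProd]

theorem secondOrderOp_inl_inr_boxProd (A : Matrix σ σ R) (f g : MvPolynomial σ R) :
    secondOrderOp A Sum.inl Sum.inr (boxProd f g)
      = ∑ i, ∑ j, A i j • boxProd (pderiv i f) (pderiv j g) := by
  simp [secondOrderOp_apply, pderiv_inl_boxProd, pderiv_inr_boxProd]

noncomputable def doubledOp (S : Matrix σ σ R) : Module.End R (MvPolynomial (σ ⊕ σ) R) :=
  secondOrderOp S Sum.inl Sum.inl + secondOrderOp S Sum.inr Sum.inr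
    + (2 : R) • secondOrderOp S Sum.inl Sum.inr

theorem lowersDegree_doubledOp (S : Matrix σ σ R) : LowersDegree (doubledOp S) :=
  ((lowersDegree_secondOrderOp _ _ _).add (lowersDegree_secondOrderOp _ _ _)).add
    ((lowersDegree_secondOrderOp _ _ _).smul _)

theorem commute_doubledOp_secondOrderOp (S B : Matrix σ σ R) (s t : σ → σ ⊕ σ) :
    Commute (doubledOp S) (secondOrderOp B s t) :=
  ((commute_secondOrderOp _ _ _ _ _ _).add_left (commute_secondOrderOp _ _ _ _ _ _)).add_left
    ((commute_secondOrderOp _ _ _ _ _ _).smul_left _)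

theorem secondOrderOp_diagMap {S : Matrix σ σ R} (hS : S.IsSymm) (p : MvPolynomial (σ ⊕ σ) R) :
    secondOrderOp S id id (diagMap p) = diagMap (doubledOp S p) := by
  have hRL : secondOrderOp S Sum.inr Sum.inl p = secondOrderOp S Sum.inl Sum.inr p := by
    rw [← secondOrderOp_transpose, hS.eq]
  have hexpand : secondOrderOp S id id (diagMap p)
      = diagMap (secondOrderOp S Sum.inl Sum.inl p + secondOrderOp S Sum.inr Sum.inr p
          + (secondOrderOp S Sum.inl Sum.inr p + secondOrderOp S Sum.inr Sum.inl p)) := by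
    simp only [secondOrderOp_apply, pderiv_diagMap, map_add, map_sum, map_smul, smul_add,
      sum_add_distrib, id]
    abel
  rw [hexpand, hRL, ← two_smul R]
  rfl

end Doubling

section Exponentials

variable {R σ : Type*} [Field R] [Fintype σ]

theorem truncExp_diagMap (c : R) {S : Matrix σ σ R} (hS : S.IsSymm) (N : ℕ)
    (p : MvPolynomial (σ ⊕ σ) R) :
    truncExp (c • secondOrderOp S id id) N (diagMap p) = diagMap (truncExp (c • doubledOp S) N p) :=
  truncExp_map diagMap.toLinearMap (fun q => by
    simp [secondOrderOp_diagMap hS, doubledOp]) N p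

theorem truncExp_inl_add_inr_boxProd [CharZero R] (c : R) (A : Matrix σ σ R) {N : ℕ}
    {f g : MvPolynomial σ R} (hN : f.totalDegree + g.totalDegree < N) :
    truncExp (c • (secondOrderOp A Sum.inl Sum.inl + secondOrderOp A Sum.inr Sum.inr)) N
        (boxProd f g)
      = boxProd (truncExp (c • secondOrderOp A id id) N f)
          (truncExp (c • secondOrderOp A id id) N g) := by
  have hR := truncExp_map (boxProd f) (L := c • secondOrderOp A Sum.inr Sum.inr)
    (M := c • secondOrderOp A id id) (fun q => by simp [secondOrderOp_inr_boxProd]) N g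
  have hL := truncExp_map (boxProd.flip (truncExp (c • secondOrderOp A id id) N g))
    (L := c • secondOrderOp A Sum.inl Sum.inl) (M := c • secondOrderOp A id id)
    (fun q => by simp [secondOrderOp_inl_boxProd]) N f
  simp only [LinearMap.flip_apply] at hL
  rw [smul_add, LowersDegree.truncExp_add_apply
    ((commute_secondOrderOp _ _ _ _ _ _).smul_left c |>.smul_right c)
    ((lowersDegree_secondOrderOp _ _ _).smul c) ((lowersDegree_secondOrderOp _ _ _).smul c)
    ((totalDegree_boxProd_le f g).trans_lt hN), hR, hL]

theorem truncExp_doubledOp_truncExp_mixed [CharZero R] (c : R) (S Λ : Matrix σ σ R) {N : ℕ}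
    {p : MvPolynomial (σ ⊕ σ) R} (hN : p.totalDegree < N) :
    truncExp (c • doubledOp S) N (truncExp ((2 * c) • secondOrderOp Λ Sum.inl Sum.inr) N p)
      = truncExp ((2 * c) • secondOrderOp (Λ + S) Sum.inl Sum.inr) N
          (truncExp (c • (secondOrderOp S Sum.inl Sum.inl + secondOrderOp S Sum.inr Sum.inr)) N
            p) := by
  have hexp : c • doubledOp S + (2 * c) • secondOrderOp Λ Sum.inl Sum.inr
      = (2 * c) • secondOrderOp (Λ + S) Sum.inl Sum.inr
        + c • (secondOrderOp S Sum.inl Sum.inl + secondOrderOp S Sum.inr Sum.inr) := by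
    rw [doubledOp, secondOrderOp_add]
    module
  rw [← LowersDegree.truncExp_add_apply
      ((commute_doubledOp_secondOrderOp _ _ _ _).smul_left c |>.smul_right _)
      ((lowersDegree_doubledOp S).smul c) ((lowersDegree_secondOrderOp _ _ _).smul _) hN,
    hexp, LowersDegree.truncExp_add_apply
      (((commute_secondOrderOp _ _ _ _ _ _).add_right
        (commute_secondOrderOp _ _ _ _ _ _)).smul_left _ |>.smul_right c)
      ((lowersDegree_secondOrderOp _ _ _).smul _)
      (((lowersDegree_secondOrderOp _ _ _).add (lowersDegree_secondOrderOp _ _ _)).smul c) hN]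

end Exponentials

theorem sum_fin_succ_pi {M β : Type*} [AddCommMonoid M] [Fintype β] {n : ℕ}
    (F : (Fin (n + 1) → β) → M) : ∑ v, F v = ∑ x, ∑ v : Fin n → β, F (Fin.cons x v) :=
  (Fintype.sum_equiv (Fin.consEquiv _) _ _ fun _ => rfl).symm.trans (Fintype.sum_prod_type _)

theorem derivs_cons {m : ℕ} (x : Fin 2) (v : Fin m → Fin 2) (f : MvPolynomial (Fin 2) ℂ) :
    derivs (Fin.cons x v) f = pderiv x (derivs v f) := by
  simp [derivs, List.ofFn_succ, pEnd]

theorem derivs_apply_eq_zero_or {m : ℕ} (v : Fin m → Fin 2) (f : MvPolynomial (Fin 2) ℂ) :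
    derivs v f = 0 ∨ (derivs v f).totalDegree + m ≤ f.totalDegree := by
  induction m with
  | zero => simp [derivs]
  | succ n ih =>
    rw [← Fin.cons_self_tail v, derivs_cons]
    rcases ih (Fin.tail v) with h | h
    · simp [h]
    · rcases lowersDegree_pderiv (v 0) (derivs (Fin.tail v) f) with h' | h'
      · exact Or.inl h'
      · right
        have h'' : (pderiv (v 0) (derivs (Fin.tail v) f)).totalDegree < _ := h'
        omega

theorem derivs_apply_eq_zero {m : ℕ} (v : Fin m → Fin 2) {f : MvPolynomial (Fin 2) ℂ}
    (h : f.totalDegree < m) : derivs v f = 0 :=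
  (derivs_apply_eq_zero_or v f).resolve_right (by omega)

theorem secondOrderOp_inl_inr_pow_boxProd (Λ : Matrix (Fin 2) (Fin 2) ℂ) (m : ℕ)
    (f g : MvPolynomial (Fin 2) ℂ) :
    (secondOrderOp Λ Sum.inl Sum.inr ^ m) (boxProd f g)
      = ∑ i : Fin m → Fin 2, ∑ j : Fin m → Fin 2,
          (∏ a, Λ (i a) (j a)) • boxProd (derivs i f) (derivs j g) := by
  induction m with
  | zero => simp [derivs]
  | succ n ih =>
    rw [pow_succ', Module.End.mul_apply, ih, sum_fin_succ_pi]
    simp only [map_sum, map_smul, secondOrderOp_inl_inr_boxProd, smul_sum, sum_fin_succ_pi,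
      derivs_cons, Fin.prod_univ_succ, Fin.cons_zero, Fin.cons_succ, smul_smul]
    conv_lhs => enter [2, i]; rw [sum_comm]; enter [2, x]; rw [sum_comm]
    rw [sum_comm]
    exact sum_congr rfl fun _ _ => sum_congr rfl fun _ _ => sum_congr rfl fun _ _ =>
      sum_congr rfl fun _ _ => by rw [mul_comm]

theorem starK_eq_diagMap_truncExp (hb : ℂ) (Λ : Matrix (Fin 2) (Fin 2) ℂ)
    (f g : MvPolynomial (Fin 2) ℂ) {N : ℕ} (hN : f.totalDegree < N) :
    starK hb Λ f g = diagMap (truncExp ((Complex.I * hb / 2) • secondOrderOp Λ Sum.inl Sum.inr) N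
      (boxProd f g)) := by
  have hterm (m : ℕ) : ((m.factorial : ℂ)⁻¹ * (Complex.I * hb / 2) ^ m) •
      diagMap ((secondOrderOp Λ Sum.inl Sum.inr ^ m) (boxProd f g)) = starTerm hb Λ m f g := by
    simp only [starTerm, secondOrderOp_inl_inr_pow_boxProd, map_sum, map_smul, diagMap_boxProd]
  rw [truncExp_smul_apply, map_sum]
  simp only [map_smul, hterm]
  refine sum_subset (range_subset_range.2 hN) fun m _ hm => ?_
  simp only [mem_range, not_lt] at hm
  simp [starTerm, derivs_apply_eq_zero _ (show f.totalDegree < m by omega)]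

theorem intertwiner_eq_truncExp (hb : ℂ) (K K' : Matrix (Fin 2) (Fin 2) ℂ)
    (f : MvPolynomial (Fin 2) ℂ) {N : ℕ} (hN : f.totalDegree < N) :
    intertwiner hb K K' f
      = truncExp ((Complex.I * hb / 4) • secondOrderOp (K' - K) id id) N f := by
  rw [((lowersDegree_secondOrderOp _ _ _).smul _).truncExp_apply_of_le (Nat.lt_succ_self _) hN,
    truncExp_smul_apply]
  rfl

theorem intertwiner_add (hb : ℂ) (K K' : Matrix (Fin 2) (Fin 2) ℂ)
    (f g : MvPolynomial (Fin 2) ℂ) :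
    intertwiner hb K K' (f + g) = intertwiner hb K K' f + intertwiner hb K K' g := by
  have := totalDegree_add f g
  let N := f.totalDegree + g.totalDegree + 1
  rw [intertwiner_eq_truncExp hb K K' _ (N := N) (by omega),
    intertwiner_eq_truncExp hb K K' f (N := N) (by omega),
    intertwiner_eq_truncExp hb K K' g (N := N) (by omega), map_add]

theorem intertwiner_smul (hb : ℂ) (K K' : Matrix (Fin 2) (Fin 2) ℂ) (c : ℂ)
    (f : MvPolynomial (Fin 2) ℂ) : intertwiner hb K K' (c • f) = c • intertwiner hb K K' f := by
  have := totalDegree_smul_le c f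
  rw [intertwiner_eq_truncExp hb K K' _ (N := f.totalDegree + 1) (by omega),
    intertwiner_eq_truncExp hb K K' f (Nat.lt_succ_self _), map_smul]

theorem intertwiner_intertwiner (hb : ℂ) (K K' : Matrix (Fin 2) (Fin 2) ℂ)
    (f : MvPolynomial (Fin 2) ℂ) : intertwiner hb K' K (intertwiner hb K K' f) = f := by
  set c := Complex.I * hb / 4
  have hlow (A : Matrix (Fin 2) (Fin 2) ℂ) : LowersDegree (c • secondOrderOp A id id) :=
    (lowersDegree_secondOrderOp _ _ _).smul c
  have hN := Nat.lt_succ_self f.totalDegree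
  rw [intertwiner_eq_truncExp hb K K' f hN,
    intertwiner_eq_truncExp hb K' K _ (((hlow _).totalDegree_truncExp_apply_le _ f).trans_lt hN),
    ← (hlow _).truncExp_add_apply ((commute_secondOrderOp _ _ _ _ _ _).smul_left c |>.smul_right c)
      (hlow _) hN,
    ← smul_add, ← secondOrderOp_add, sub_add_sub_cancel, sub_self, secondOrderOp_zero, smul_zero,
    truncExp_zero_apply (Nat.succ_pos _)]

theorem intertwiner_starK {K K' : Matrix (Fin 2) (Fin 2) ℂ} (hK : K.IsSymm) (hK' : K'.IsSymm)
    (hb : ℂ) (f g : MvPolynomial (Fin 2) ℂ) :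
    intertwiner hb K K' (starK hb (K + matJ) f g)
      = starK hb (K' + matJ) (intertwiner hb K K' f) (intertwiner hb K K' g) := by
  set c := Complex.I * hb / 4
  set S := K' - K
  set N := f.totalDegree + g.totalDegree + 1
  have hbox : (boxProd f g).totalDegree < N := (totalDegree_boxProd_le f g).trans_lt (by omega)
  have hstar (Λ : Matrix (Fin 2) (Fin 2) ℂ) (p q : MvPolynomial (Fin 2) ℂ)
      (hp : p.totalDegree < N) : starK hb Λ p q
        = diagMap (truncExp ((2 * c) • secondOrderOp Λ Sum.inl Sum.inr) N (boxProd p q)) := by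
    rw [starK_eq_diagMap_truncExp hb Λ p q hp, show Complex.I * hb / 2 = 2 * c by ring]
  have hI (p : MvPolynomial (Fin 2) ℂ) (hp : p.totalDegree < N) :
      intertwiner hb K K' p = truncExp (c • secondOrderOp S id id) N p :=
    intertwiner_eq_truncExp hb K K' p hp
  have hdeg : (starK hb (K + matJ) f g).totalDegree < N := by
    rw [hstar _ _ _ (by omega)]
    exact (totalDegree_rename_le _ _).trans_lt
      ((((lowersDegree_secondOrderOp _ _ _).smul _).totalDegree_truncExp_apply_le _ _).trans_lt
        hbox)
  have hdegI : (intertwiner hb K K' f).totalDegree < N := by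
    rw [hI f (by omega)]
    exact (((lowersDegree_secondOrderOp _ _ _).smul c).totalDegree_truncExp_apply_le _ _).trans_lt
      (by omega)
  calc intertwiner hb K K' (starK hb (K + matJ) f g)
      = truncExp (c • secondOrderOp S id id) N (diagMap
          (truncExp ((2 * c) • secondOrderOp (K + matJ) Sum.inl Sum.inr) N (boxProd f g))) := by
        rw [hI _ hdeg, hstar _ _ _ (by omega)]
    _ = diagMap (truncExp (c • doubledOp S) N
          (truncExp ((2 * c) • secondOrderOp (K + matJ) Sum.inl Sum.inr) N (boxProd f g))) :=
        truncExp_diagMap c (hK'.sub hK) N _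
    _ = diagMap (truncExp ((2 * c) • secondOrderOp (K' + matJ) Sum.inl Sum.inr) N
          (truncExp (c • (secondOrderOp S Sum.inl Sum.inl + secondOrderOp S Sum.inr Sum.inr)) N
            (boxProd f g))) := by
        rw [truncExp_doubledOp_truncExp_mixed c S _ hbox,
          show K + matJ + S = K' + matJ by simp only [S]; abel]
    _ = diagMap (truncExp ((2 * c) • secondOrderOp (K' + matJ) Sum.inl Sum.inr) N
          (boxProd (intertwiner hb K K' f) (intertwiner hb K K' g))) := by
        rw [truncExp_inl_add_inr_boxProd c S (by omega), hI f (by omega), hI g (by omega)]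
    _ = starK hb (K' + matJ) (intertwiner hb K K' f) (intertwiner hb K K' g) :=
        (hstar _ _ _ hdegI).symm

theorem stmt_17_general (hb : ℂ) (K K' : Matrix (Fin 2) (Fin 2) ℂ)
    (hK : K.IsSymm) (hK' : K'.IsSymm) :
    (∀ f g : MvPolynomial (Fin 2) ℂ,
      intertwiner hb K K' (f + g) = intertwiner hb K K' f + intertwiner hb K K' g) ∧
    (∀ (c : ℂ) (f : MvPolynomial (Fin 2) ℂ),
      intertwiner hb K K' (c • f) = c • intertwiner hb K K' f) ∧
    Function.Bijective (intertwiner hb K K') ∧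
    (∀ f g : MvPolynomial (Fin 2) ℂ,
      intertwiner hb K K' (starK hb (K + matJ) f g)
        = starK hb (K' + matJ) (intertwiner hb K K' f) (intertwiner hb K K' g)) :=
  ⟨intertwiner_add hb K K', intertwiner_smul hb K K',
    Function.bijective_iff_has_inverse.2
      ⟨intertwiner hb K' K, intertwiner_intertwiner hb K K', intertwiner_intertwiner hb K' K⟩,
    intertwiner_starK hK hK' hb⟩

/-- For a nonzero `ħ` and symmetric `2×2` complex matrices `K, K'`, the
intertwiner `I_K^{K'}` is a well-defined `ℂ`-linear bijection of `ℂ[u₁,u₂]` and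
satisfies `I_K^{K'}(f ∗_K g) = (I_K^{K'} f) ∗_{K'} (I_K^{K'} g)`, i.e. it is an
algebra isomorphism from `(ℂ[u₁,u₂], ∗_K)` to `(ℂ[u₁,u₂], ∗_{K'})`. -/
theorem stmt_17 (hb : ℂ) (hhb : hb ≠ 0) (K K' : Matrix (Fin 2) (Fin 2) ℂ)
    (hK : K.IsSymm) (hK' : K'.IsSymm) :
    (∀ f g : MvPolynomial (Fin 2) ℂ,
      intertwiner hb K K' (f + g) = intertwiner hb K K' f + intertwiner hb K K' g) ∧
    (∀ (c : ℂ) (f : MvPolynomial (Fin 2) ℂ),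
      intertwiner hb K K' (c • f) = c • intertwiner hb K K' f) ∧
    Function.Bijective (intertwiner hb K K') ∧
    (∀ f g : MvPolynomial (Fin 2) ℂ,
      intertwiner hb K K' (starK hb (K + matJ) f g)
        = starK hb (K' + matJ) (intertwiner hb K K' f) (intertwiner hb K K' g)) :=
  stmt_17_general hb K K' hK hK'
end
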